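/- Let m ≥ 1, let Σ be an m×m real symmetric positive definite matrix with symmetric positive definite square root Σ^{1/2}, let t_1,…,t_m be real numbers, set t_{m+1} := 0 and c_i := t_i − t_{i+1}, and define ψ : M_m(ℝ) → ℂ by ψ(T) := ∏_{i=1}^m det(E_iᵀ(I_m − i·Σ^{1/2} T Σ^{1/2})E_i)^{c_i}, using principal-branch complex powers. Let T be an m×m real matrix such that det(E_iᵀ(I_m − i·Σ^{1/2} T Σ^{1/2})E_i) does not lie in (−∞,0] for each i = 1,…,m. Then ψ is Fréchet differentiable (over ℝ) at T, and Dψ(T)(H) = −i·(∑_{i=1}^m c_i · tr(A_i H))·ψ(T) for every H ∈ M_m(ℝ), where A_i := Σ^{1/2} E_i (E_iᵀ(I_m − i·Σ^{1/2} T Σ^{1/2})E_i)^{−1} E_iᵀ Σ^{1/2}. -/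

import Mathlib

open MeasureTheory Matrix Finset

noncomputable section

/-- Measurable space structure on real matrices (the product σ-algebra). -/
instance matrixMeasurableSpace (m n : ℕ) : MeasurableSpace (Matrix (Fin m) (Fin n) ℝ) :=
  MeasurableSpace.pi

attribute [local instance] Matrix.normedAddCommGroup Matrix.normedSpace

/-- `nth κ j` is `κ j` when `j < m` and `0` otherwise. -/
def nth {m : ℕ} (κ : Fin m → ℕ) (j : ℕ) : ℕ := if h : j < m then κ ⟨j, h⟩ else 0

/-- Determinant of the `k × k` leading principal submatrix (for `k ≤ m`). -/
def lpm {R : Type*} [CommRing R] {m : ℕ} (A : Matrix (Fin m) (Fin m) R) (k : ℕ) : R :=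
  (Matrix.of fun r s : Fin (min k m) =>
    A (Fin.castLE (min_le_right k m) r) (Fin.castLE (min_le_right k m) s)).det

/-- The generalized power (highest weight vector)
`q_κ(A) = det(A)^{k_m} ∏_{i=1}^{m-1} det(A_i)^{k_i - k_{i+1}}`. -/
def gpow {R : Type*} [CommRing R] {m : ℕ} (κ : Fin m → ℕ) (A : Matrix (Fin m) (Fin m) R) : R :=
  ∏ i : Fin m, lpm A ((i : ℕ) + 1) ^ (nth κ (i : ℕ) - nth κ ((i : ℕ) + 1))

/-- Lebesgue measure on symmetric matrices: the pushforward of Lebesgue measure on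
`ℝ^{m(m+1)/2}` under the coordinates `(x_{ij})_{i ≤ j}`. -/
def symVolume (m : ℕ) : Measure (Matrix (Fin m) (Fin m) ℝ) :=
  Measure.map (fun x : ({p : Fin m × Fin m // p.1 ≤ p.2} → ℝ) =>
    Matrix.of fun i j => if h : i ≤ j then x ⟨(i, j), h⟩ else x ⟨(j, i), le_of_not_ge h⟩)
    volume

/-- The open cone of symmetric positive definite real matrices. -/
def PDcone (m : ℕ) : Set (Matrix (Fin m) (Fin m) ℝ) := {X | X.PosDef}

/-- The `m × k` matrix formed by the first `k` columns of the identity matrix. -/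
def Emat (R : Type*) [Zero R] [One R] (m k : ℕ) : Matrix (Fin m) (Fin k) R :=
  Matrix.of fun r c => if (r : ℕ) = (c : ℕ) then 1 else 0

/-- The generalized gamma function of weight `κ`:
`Γ_m[a, κ] = π^{m(m-1)/4} ∏_{i=1}^m Γ(a + k_i - (i-1)/2)`. -/
def GammaI (m : ℕ) (κ : Fin m → ℕ) (a : ℝ) : ℝ :=
  Real.pi ^ (((m * (m - 1) : ℕ) : ℝ) / 4) *
    ∏ i : Fin m, Real.Gamma (a + κ i - (i : ℝ) / 2)

/-- Kotz's generalized gamma function of weight `-κ`: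
`Γ_m[a, -κ] = π^{m(m-1)/4} ∏_{i=1}^m Γ(a - k_i - (m-i)/2)`. -/
def GammaII (m : ℕ) (κ : Fin m → ℕ) (a : ℝ) : ℝ :=
  Real.pi ^ (((m * (m - 1) : ℕ) : ℝ) / 4) *
    ∏ i : Fin m, Real.Gamma (a - κ i - ((m : ℝ) - 1 - (i : ℝ)) / 2)

/-- The Riesz type I density with parameters `(a, κ, Σ)`. -/
def densityI {m : ℕ} (κ : Fin m → ℕ) (Sig : Matrix (Fin m) (Fin m) ℝ) (a : ℝ)
    (X : Matrix (Fin m) (Fin m) ℝ) : ℝ :=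
  Real.exp (-((Sig⁻¹ * X).trace)) * X.det ^ (a - ((m : ℝ) + 1) / 2) * gpow κ X /
    (GammaI m κ a * Sig.det ^ a * gpow κ Sig)

/-- The Riesz type II density with parameters `(a, κ, Σ)`. -/
def densityII {m : ℕ} (κ : Fin m → ℕ) (Sig : Matrix (Fin m) (Fin m) ℝ) (a : ℝ)
    (X : Matrix (Fin m) (Fin m) ℝ) : ℝ :=
  Real.exp (-((Sig⁻¹ * X).trace)) * X.det ^ (a - ((m : ℝ) + 1) / 2) * gpow κ X⁻¹ /
    (GammaII m κ a * Sig.det ^ a * gpow κ Sig⁻¹)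

/-- Entrywise coercion of a real matrix to a complex matrix. -/
def cmat {m : ℕ} (A : Matrix (Fin m) (Fin m) ℝ) : Matrix (Fin m) (Fin m) ℂ :=
  A.map Complex.ofReal

/-- `nthR t j` is `t j` when `j < m` and `0` otherwise. -/
def nthR {m : ℕ} (t : Fin m → ℝ) (j : ℕ) : ℝ := if h : j < m then t ⟨j, h⟩ else 0

/-- The `k × k` leading principal submatrix `E_kᵀ M E_k` of a complex matrix. -/
def lpsub {m : ℕ} (M : Matrix (Fin m) (Fin m) ℂ) (k : ℕ) : Matrix (Fin k) (Fin k) ℂ :=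
  (Emat ℂ m k)ᵀ * M * Emat ℂ m k

/-- The complex matrix `I_m - i · Σ^{1/2} T Σ^{1/2}`. -/
def Rmat {m : ℕ} (Shalf T : Matrix (Fin m) (Fin m) ℝ) : Matrix (Fin m) (Fin m) ℂ :=
  1 - Complex.I • (cmat Shalf * cmat T * cmat Shalf)

/-- `A_i = Σ^{1/2} E_i (E_iᵀ (I_m - i Σ^{1/2} T Σ^{1/2}) E_i)⁻¹ E_iᵀ Σ^{1/2}`. -/
def Amat {m : ℕ} (Shalf T : Matrix (Fin m) (Fin m) ℝ) (i : Fin m) :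
    Matrix (Fin m) (Fin m) ℂ :=
  cmat Shalf * Emat ℂ m ((i : ℕ) + 1) * (lpsub (Rmat Shalf T) ((i : ℕ) + 1))⁻¹ *
    (Emat ℂ m ((i : ℕ) + 1))ᵀ * cmat Shalf

/-- The characteristic function of the Riesz type I distribution,
`φ(T) = ∏_i det(E_iᵀ (I - i Σ^{1/2} T Σ^{1/2}) E_i)^{-(t_i - t_{i+1})}`. -/
def phiI {m : ℕ} (Shalf : Matrix (Fin m) (Fin m) ℝ) (t : Fin m → ℝ)
    (T : Matrix (Fin m) (Fin m) ℝ) : ℂ :=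
  ∏ i : Fin m,
    (lpsub (Rmat Shalf T) ((i : ℕ) + 1)).det ^ ((-(t i - nthR t ((i : ℕ) + 1)) : ℝ) : ℂ)

/-- The characteristic function of the Riesz type II distribution,
`ψ(T) = ∏_i det(E_iᵀ (I - i Σ^{1/2} T Σ^{1/2}) E_i)^{(t_i - t_{i+1})}`. -/
def psiII {m : ℕ} (Shalf : Matrix (Fin m) (Fin m) ℝ) (t : Fin m → ℝ)
    (T : Matrix (Fin m) (Fin m) ℝ) : ℂ :=
  ∏ i : Fin m,
    (lpsub (Rmat Shalf T) ((i : ℕ) + 1)).det ^ (((t i - nthR t ((i : ℕ) + 1)) : ℝ) : ℂ)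

/-! Jacobi's formula `d det(M)[H] = tr(adj M · H)` follows from the row-multilinearity of the
determinant, so at an invertible `M` the logarithmic derivative of `det` is `H ↦ tr(M⁻¹ H)`.
The map `T ↦ M_i(T) = E_iᵀ (I - i Σ^{1/2} T Σ^{1/2}) E_i` is affine with linear part
`H ↦ -i E_iᵀ Σ^{1/2} H Σ^{1/2} E_i`; on the slit plane the principal power `z ↦ z^c` multiplies
logarithmic derivatives by `c`; and logarithmic derivatives add over a product. Hence
`Dψ(T)(H) = ψ(T) · ∑ c_i · (-i) tr(M_i(T)⁻¹ E_iᵀ Σ^{1/2} H Σ^{1/2} E_i)`, and cycling the trace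
turns each summand into `-i c_i tr(A_i H)`. -/

namespace Matrix

variable {n : Type*} [Fintype n] [DecidableEq n]

theorem sum_det_updateRow_eq_trace_adjugate_mul {R : Type*} [CommRing R] (M H : Matrix n n R) :
    ∑ i, (M.updateRow i (H i)).det = (M.adjugate * H).trace := by
  simp only [← cramer_transpose_apply, cramer_eq_adjugate_mulVec, ← adjugate_transpose, trace,
    diag_apply, mul_apply, mulVec, dotProduct, transpose_apply]
  rw [Finset.sum_comm]

theorem adjugate_eq_det_smul_inv {R : Type*} [CommRing R] {M : Matrix n n R} (hM : IsUnit M.det) :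
    M.adjugate = M.det • M⁻¹ := by
  rw [inv_def, smul_smul, Ring.mul_inverse_cancel _ hM, one_smul]

variable {𝕜 : Type*} [NontriviallyNormedField 𝕜]

def detRowContinuousMultilinear : ContinuousMultilinearMap 𝕜 (fun _ : n => n → 𝕜) 𝕜 where
  toMultilinearMap := (detRowAlternating (R := 𝕜) (n := n)).toMultilinearMap
  cont := continuous_id.matrix_det

variable [CompleteSpace 𝕜]

def traceMulLeftCLM (A : Matrix n n 𝕜) : Matrix n n 𝕜 →L[𝕜] 𝕜 :=
  LinearMap.toContinuousLinearMap (traceLinearMap n 𝕜 𝕜 ∘ₗ LinearMap.mulLeft 𝕜 A)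

@[simp]
theorem traceMulLeftCLM_apply (A H : Matrix n n 𝕜) : traceMulLeftCLM A H = (A * H).trace := rfl

theorem hasFDerivAt_det (M : Matrix n n 𝕜) :
    HasFDerivAt det (traceMulLeftCLM M.adjugate) M := by
  have hlin : (detRowContinuousMultilinear (𝕜 := 𝕜) (n := n)).linearDeriv M =
      traceMulLeftCLM M.adjugate := ContinuousLinearMap.ext fun H =>
    (ContinuousMultilinearMap.linearDeriv_apply _ _ _).trans
      (sum_det_updateRow_eq_trace_adjugate_mul M H)
  exact hlin ▸ detRowContinuousMultilinear.hasFDerivAt M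

theorem hasFDerivAt_det_of_isUnit {M : Matrix n n 𝕜} (hM : IsUnit M.det) :
    HasFDerivAt det (M.det • traceMulLeftCLM M⁻¹) M := by
  convert hasFDerivAt_det M using 1
  ext H
  simp [adjugate_eq_det_smul_inv hM]

end Matrix

section LogDeriv

variable {𝕜 E : Type*} [NontriviallyNormedField 𝕜] [NormedAddCommGroup E] [NormedSpace 𝕜 E]
  {x : E}

theorem HasFDerivAt.finsetProd_of_logDeriv {ι 𝔸 : Type*} [NormedCommRing 𝔸] [NormedAlgebra 𝕜 𝔸]
    {u : Finset ι} {f : ι → E → 𝔸} {g : ι → E →L[𝕜] 𝔸}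
    (hf : ∀ i ∈ u, HasFDerivAt (f i) (f i x • g i) x) :
    HasFDerivAt (∏ i ∈ u, f i ·) ((∏ i ∈ u, f i x) • ∑ i ∈ u, g i) x := by
  classical
  convert HasFDerivAt.finsetProd hf using 1
  rw [Finset.smul_sum]
  refine Finset.sum_congr rfl fun i hi => ?_
  rw [smul_smul, Finset.prod_erase_mul _ _ hi]

theorem HasFDerivAt.cpow_const_of_logDeriv [NormedAlgebra 𝕜 ℂ] {z : E → ℂ} {g : E →L[𝕜] ℂ}
    (c : ℂ) (hz : HasFDerivAt z (z x • g) x) (hx : z x ∈ Complex.slitPlane) :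
    HasFDerivAt (fun y => z y ^ c) (z x ^ c • c • g) x := by
  refine ((Complex.hasStrictDerivAt_cpow_const (c := c) hx).hasDerivAt.comp_hasFDerivAt x
    hz).congr_fderiv ?_
  rw [smul_smul, smul_smul, Complex.cpow_sub _ _ (Complex.slitPlane_ne_zero hx), Complex.cpow_one]
  field_simp [Complex.slitPlane_ne_zero hx]

variable {𝕜' n : Type*} [NontriviallyNormedField 𝕜'] [CompleteSpace 𝕜'] [NormedAlgebra 𝕜 𝕜']
  [Fintype n] [DecidableEq n]

theorem HasFDerivAt.det_of_isUnit {F : E → Matrix n n 𝕜'} {F' : E →L[𝕜] Matrix n n 𝕜'}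
    (hF : HasFDerivAt F F' x) (hx : IsUnit (F x).det) :
    HasFDerivAt (fun y => (F y).det)
      ((F x).det • ((traceMulLeftCLM (F x)⁻¹).restrictScalars 𝕜).comp F') x :=
  ((Matrix.hasFDerivAt_det_of_isUnit hx).restrictScalars 𝕜).comp x hF

end LogDeriv

section RieszTypeII

variable {m : ℕ}

def lpsubSandwichCLM (S : Matrix (Fin m) (Fin m) ℝ) (k : ℕ) :
    Matrix (Fin m) (Fin m) ℝ →L[ℝ] Matrix (Fin k) (Fin k) ℂ :=
  LinearMap.toContinuousLinearMap <|
    mulRightLinearMap (Fin k) ℝ (Emat ℂ m k) ∘ₗ mulLeftLinearMap (Fin m) ℝ (Emat ℂ m k)ᵀ ∘ₗ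
      mulRightLinearMap (Fin m) ℝ (cmat S) ∘ₗ mulLeftLinearMap (Fin m) ℝ (cmat S) ∘ₗ
      (Complex.ofRealCLM : ℝ →ₗ[ℝ] ℂ).mapMatrix

theorem lpsubSandwichCLM_apply (S H : Matrix (Fin m) (Fin m) ℝ) (k : ℕ) :
    lpsubSandwichCLM S k H = lpsub (cmat S * cmat H * cmat S) k := rfl

def traceMulCLM (A : Matrix (Fin m) (Fin m) ℂ) : Matrix (Fin m) (Fin m) ℝ →L[ℝ] ℂ :=
  LinearMap.toContinuousLinearMap <|
    (traceLinearMap (Fin m) ℝ ℂ) ∘ₗ mulLeftLinearMap (Fin m) ℝ A ∘ₗ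
      (Complex.ofRealCLM : ℝ →ₗ[ℝ] ℂ).mapMatrix

theorem traceMulCLM_apply (A : Matrix (Fin m) (Fin m) ℂ) (H : Matrix (Fin m) (Fin m) ℝ) :
    traceMulCLM A H = (A * cmat H).trace := rfl

theorem hasFDerivAt_lpsub_Rmat (S T : Matrix (Fin m) (Fin m) ℝ) (k : ℕ) :
    HasFDerivAt (fun T' => lpsub (Rmat S T') k) (-Complex.I • lpsubSandwichCLM S k) T := by
  have h_affine : (fun T' => lpsub (Rmat S T') k) =
      fun T' => lpsub (1 : Matrix (Fin m) (Fin m) ℂ) k + (-Complex.I • lpsubSandwichCLM S k) T' := by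
    funext T'
    simp only [Rmat, lpsub, lpsubSandwichCLM_apply, _root_.smul_apply, sub_eq_add_neg,
      Matrix.mul_add, Matrix.add_mul, Matrix.mul_neg, Matrix.neg_mul, Matrix.mul_smul,
      Matrix.smul_mul, Matrix.mul_one, neg_smul]
  rw [h_affine]
  exact (ContinuousLinearMap.hasFDerivAt _).const_add _

theorem trace_mul_lpsub (S H : Matrix (Fin m) (Fin m) ℂ) {k : ℕ} (B : Matrix (Fin k) (Fin k) ℂ) :
    (B * lpsub (S * H * S) k).trace = (S * Emat ℂ m k * B * (Emat ℂ m k)ᵀ * S * H).trace := by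
  unfold lpsub
  set E := Emat ℂ m k
  calc (B * (Eᵀ * (S * H * S) * E)).trace = (B * (Eᵀ * S * H * S) * E).trace := by
        simp only [Matrix.mul_assoc]
    _ = (E * (B * (Eᵀ * S * H * S))).trace := trace_mul_comm _ _
    _ = (E * B * Eᵀ * S * H * S).trace := by simp only [Matrix.mul_assoc]
    _ = (S * (E * B * Eᵀ * S * H)).trace := trace_mul_comm _ _
    _ = (S * E * B * Eᵀ * S * H).trace := by simp only [Matrix.mul_assoc]

theorem hasFDerivAt_det_lpsub_Rmat (S T : Matrix (Fin m) (Fin m) ℝ) (i : Fin m)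
    (hT : (lpsub (Rmat S T) ((i : ℕ) + 1)).det ≠ 0) :
    HasFDerivAt (fun T' => (lpsub (Rmat S T') ((i : ℕ) + 1)).det)
      ((lpsub (Rmat S T) ((i : ℕ) + 1)).det • -Complex.I • traceMulCLM (Amat S T i)) T := by
  refine ((hasFDerivAt_lpsub_Rmat S T _).det_of_isUnit hT.isUnit).congr_fderiv <|
    ContinuousLinearMap.ext fun H => congrArg ((lpsub (Rmat S T) _).det * ·) ?_
  show ((lpsub (Rmat S T) _)⁻¹ * (-Complex.I • lpsub (cmat S * cmat H * cmat S) _)).trace = _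
  rw [Matrix.mul_smul, trace_smul, trace_mul_lpsub, smul_eq_mul]
  rfl

def psiIIFDeriv (S : Matrix (Fin m) (Fin m) ℝ) (t : Fin m → ℝ) (T : Matrix (Fin m) (Fin m) ℝ) :
    Matrix (Fin m) (Fin m) ℝ →L[ℝ] ℂ :=
  psiII S t T • ∑ i, ((t i - nthR t ((i : ℕ) + 1) : ℝ) : ℂ) • -Complex.I • traceMulCLM (Amat S T i)

theorem hasFDerivAt_psiII (S : Matrix (Fin m) (Fin m) ℝ) (t : Fin m → ℝ)
    {T : Matrix (Fin m) (Fin m) ℝ}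
    (hT : ∀ i : Fin m, (lpsub (Rmat S T) ((i : ℕ) + 1)).det ∈ Complex.slitPlane) :
    HasFDerivAt (psiII S t) (psiIIFDeriv S t T) T :=
  HasFDerivAt.finsetProd_of_logDeriv fun i _ =>
    (hasFDerivAt_det_lpsub_Rmat S T i (Complex.slitPlane_ne_zero (hT i))).cpow_const_of_logDeriv
      _ (hT i)

theorem psiIIFDeriv_apply (S : Matrix (Fin m) (Fin m) ℝ) (t : Fin m → ℝ)
    (T H : Matrix (Fin m) (Fin m) ℝ) :
    psiIIFDeriv S t T H = -Complex.I
      * (∑ i : Fin m, ((t i - nthR t ((i : ℕ) + 1) : ℝ) : ℂ) * (Amat S T i * cmat H).trace)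
      * psiII S t T := by
  simp only [psiIIFDeriv, _root_.smul_apply, FunLike.coe_sum, Finset.sum_apply,
    traceMulCLM_apply, smul_eq_mul, Finset.mul_sum, Finset.sum_mul]
  exact Finset.sum_congr rfl fun _ _ => by ring

end RieszTypeII

theorem riesz_typeII_charfun_deriv_general {m : ℕ}
    (Shalf : Matrix (Fin m) (Fin m) ℝ)
    (t : Fin m → ℝ)
    (T : Matrix (Fin m) (Fin m) ℝ)
    (hT : ∀ i : Fin m, (lpsub (Rmat Shalf T) ((i : ℕ) + 1)).det ∈ Complex.slitPlane) :
    ∃ L : Matrix (Fin m) (Fin m) ℝ →L[ℝ] ℂ,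
      HasFDerivAt (psiII Shalf t) L T ∧
        ∀ H : Matrix (Fin m) (Fin m) ℝ,
          L H = -Complex.I
              * (∑ i : Fin m, ((t i - nthR t ((i : ℕ) + 1) : ℝ) : ℂ)
                  * (Amat Shalf T i * cmat H).trace)
              * psiII Shalf t T :=
  ⟨psiIIFDeriv Shalf t T, hasFDerivAt_psiII Shalf t hT, psiIIFDeriv_apply Shalf t T⟩

/-- First Fréchet derivative of the characteristic function of the Riesz type II
distribution: `Dψ(T)(H) = -i (∑_i (t_i - t_{i+1}) tr(A_i H)) ψ(T)`. -/
theorem riesz_typeII_charfun_deriv {m : ℕ} (hm : 1 ≤ m)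
    (Sig Shalf : Matrix (Fin m) (Fin m) ℝ)
    (hSig : Sig.PosDef) (hShalf : Shalf.PosDef) (hShalf_symm : Shalf.IsSymm)
    (hsq : Shalf * Shalf = Sig)
    (t : Fin m → ℝ)
    (T : Matrix (Fin m) (Fin m) ℝ)
    (hT : ∀ i : Fin m, (lpsub (Rmat Shalf T) ((i : ℕ) + 1)).det ∈ Complex.slitPlane) :
    ∃ L : Matrix (Fin m) (Fin m) ℝ →L[ℝ] ℂ,
      HasFDerivAt (psiII Shalf t) L T ∧
        ∀ H : Matrix (Fin m) (Fin m) ℝ,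
          L H = -Complex.I
              * (∑ i : Fin m, ((t i - nthR t ((i : ℕ) + 1) : ℝ) : ℂ)
                  * (Amat Shalf T i * cmat H).trace)
              * psiII Shalf t T :=
  riesz_typeII_charfun_deriv_general Shalf t T hT
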